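/- Let k be an infinite field and let Δ = Δ^i * ∂Δ^j be the join of an i-dimensional simplex with the boundary complex of a j-dimensional simplex. Suppose Θ is a generic l.s.o.p. for k[Δ]. Then for any (j−1)-dimensional face σ of Δ, the face monomial x_σ generates the one-dimensional vector space (k[Δ]/Θ)_j ≅ k. -/

import Mathlib

open Finset MvPolynomial Module

/-- A finite collection of finite subsets of `ℕ`, thought of as the set of faces of a
(finite abstract) simplicial complex with vertices in `ℕ`. -/
abbrev FaceSet : Type := Finset (Finset ℕ)

/-- `Δ` is an abstract simplicial complex: it contains the empty face and is closed
under taking subsets. -/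
def IsComplex (Δ : FaceSet) : Prop :=
  ∅ ∈ Δ ∧ ∀ σ ∈ Δ, ∀ τ ⊆ σ, τ ∈ Δ

/-- `hasDim Δ n` : the simplicial complex `Δ` is `n`-dimensional, i.e. every face has at
most `n+1` vertices and some face has exactly `n+1` vertices. -/
def hasDim (Δ : FaceSet) (n : ℕ) : Prop :=
  (∀ σ ∈ Δ, σ.card ≤ n + 1) ∧ ∃ σ ∈ Δ, σ.card = n + 1

/-- `fNum Δ j` is the number of faces of `Δ` of cardinality `j`, i.e. the face number
`f_{j-1}` counting `(j-1)`-dimensional faces. -/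
def fNum (Δ : FaceSet) (j : ℕ) : ℕ := (Δ.filter fun σ => σ.card = j).card

/-- The `h`-vector of a `(d-1)`-dimensional complex:
`h_i = ∑_{j=0}^{i} (-1)^{i-j} C(d-j, d-i) f_{j-1}`. -/
def hVec (Δ : FaceSet) (d i : ℕ) : ℤ :=
  ∑ j ∈ Finset.range (i + 1),
    (-1 : ℤ) ^ (i - j) * ((d - j).choose (d - i) : ℤ) * (fNum Δ j : ℤ)

/-- The `g`-vector: `g_0 = h_0` and `g_{i+1} = h_{i+1} - h_i`. -/
def gVec (Δ : FaceSet) (d : ℕ) : ℕ → ℤ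
  | 0 => hVec Δ d 0
  | i + 1 => hVec Δ d (i + 1) - hVec Δ d i

/-- `pseudoPow a i = a^⟨i⟩`, the `i`-th pseudopower of `a`: writing (greedily)
`a = C(a_i,i) + C(a_{i-1},i-1) + ⋯ + C(a_j,j)` with `a_i > a_{i-1} > ⋯ > a_j ≥ j ≥ 1`,
`a^⟨i⟩ = C(a_i+1,i+1) + ⋯ + C(a_j+1,j+1)`; also `0^⟨i⟩ = 0`. -/
def pseudoPow : ℕ → ℕ → ℕ
  | _, 0 => 0
  | 0, _ + 1 => 0
  | a + 1, i + 1 =>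
    let n := Nat.findGreatest (fun n => Nat.choose n (i + 1) ≤ a + 1) (a + i + 2)
    Nat.choose (n + 1) (i + 2) + pseudoPow (a + 1 - Nat.choose n (i + 1)) i
  termination_by a i => i

/-- `(g_0, g_1, …, g_l)` is an `M`-vector: `g_0 = 1` and
`0 ≤ g_{i+1} ≤ g_i^⟨i⟩` for all `i ≥ 1` (with `i+1 ≤ l`). -/
def IsMVector (g : ℕ → ℤ) (l : ℕ) : Prop :=
  g 0 = 1 ∧ ∀ i, 1 ≤ i → i + 1 ≤ l →
    0 ≤ g (i + 1) ∧ g (i + 1) ≤ (pseudoPow (g i).toNat i : ℤ)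

/-- The face monomial `x_σ = ∏_{i ∈ σ} x_i`. -/
noncomputable def faceMonomial (k : Type*) [CommRing k] (σ : Finset ℕ) : MvPolynomial ℕ k :=
  ∏ i ∈ σ, X i

/-- The Stanley–Reisner ideal of `Δ`, generated by the squarefree monomials corresponding
to non-faces of `Δ`. -/
noncomputable def SRIdeal (k : Type*) [CommRing k] (Δ : FaceSet) : Ideal (MvPolynomial ℕ k) :=
  Ideal.span {f | ∃ s : Finset ℕ, s ∉ Δ ∧ f = faceMonomial k s}

/-- The quotient of the Stanley–Reisner ring `k[Δ]` by the ideal generated by a set `S`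
of polynomials (e.g. an l.s.o.p., possibly together with a further linear form). -/
abbrev QuotRing (k : Type*) [CommRing k] (Δ : FaceSet) (S : Set (MvPolynomial ℕ k)) : Type _ :=
  MvPolynomial ℕ k ⧸ (SRIdeal k Δ ⊔ Ideal.span S)

/-- The degree-`i` graded piece of `QuotRing k Δ S`: the image of the homogeneous
degree-`i` polynomials under the quotient map. -/
noncomputable def gradedPiece (k : Type*) [CommRing k] (Δ : FaceSet)
    (S : Set (MvPolynomial ℕ k)) (i : ℕ) : Submodule k (QuotRing k Δ S) :=
  Submodule.map (Ideal.Quotient.mkₐ k (SRIdeal k Δ ⊔ Ideal.span S)).toLinearMap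
    (homogeneousSubmodule ℕ k i)

/-- `Θ` is a linear system of parameters (l.s.o.p.) for `k[Δ]`: a family of `d` linear
forms such that `k[Δ]/Θ` is a finite-dimensional `k`-vector space. -/
def IsLSOP (k : Type*) [Field k] (Δ : FaceSet) {d : ℕ}
    (Θ : Fin d → MvPolynomial ℕ k) : Prop :=
  (∀ i, (Θ i).IsHomogeneous 1) ∧ FiniteDimensional k (QuotRing k Δ (Set.range Θ))

/-- Multiplication by (the class of) `ω` maps the degree-`i` piece of `k[Δ]/(S)` onto the
degree-`i+1` piece. -/
def mulMapSurjOn (k : Type*) [Field k] (Δ : FaceSet) (S : Set (MvPolynomial ℕ k))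
    (ω : MvPolynomial ℕ k) (i : ℕ) : Prop :=
  ∀ y ∈ gradedPiece k Δ S (i + 1), ∃ x ∈ gradedPiece k Δ S i,
    Ideal.Quotient.mk (SRIdeal k Δ ⊔ Ideal.span S) ω * x = y

/-- Multiplication by (the class of) `ω` is injective on the degree-`i` piece of `k[Δ]/(S)`. -/
def mulMapInjOn (k : Type*) [Field k] (Δ : FaceSet) (S : Set (MvPolynomial ℕ k))
    (ω : MvPolynomial ℕ k) (i : ℕ) : Prop :=
  ∀ x ∈ gradedPiece k Δ S i,
    Ideal.Quotient.mk (SRIdeal k Δ ⊔ Ideal.span S) ω * x = 0 → x = 0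

/-- `ω` is a weak Lefschetz element for `k[Δ]/Θ` (with `Δ` of dimension `d-1`):
a linear form such that multiplication `·ω : (k[Δ]/Θ)_i → (k[Δ]/Θ)_{i+1}` is injective or
surjective for every `i < d`. -/
def IsWLE (k : Type*) [Field k] (Δ : FaceSet) {d : ℕ}
    (Θ : Fin d → MvPolynomial ℕ k) (ω : MvPolynomial ℕ k) : Prop :=
  ω.IsHomogeneous 1 ∧ ∀ i < d,
    mulMapInjOn k Δ (Set.range Θ) ω i ∨ mulMapSurjOn k Δ (Set.range Θ) ω i

/-- The `(d-1)`-dimensional complex `Δ` has the weak Lefschetz property over `k`. -/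
def HasWLP (k : Type*) [Field k] (Δ : FaceSet) (d : ℕ) : Prop :=
  ∃ (Θ : Fin d → MvPolynomial ℕ k) (ω : MvPolynomial ℕ k), IsLSOP k Δ Θ ∧ IsWLE k Δ Θ ω

/-- The vertex set of `Δ`. -/
def vertices (Δ : FaceSet) : Finset ℕ := Δ.sup id

/-- `Θ` is a *generic* l.s.o.p. for `k[Δ]`: an l.s.o.p. such that every maximal
(`d × d`) minor of the associated coefficient matrix `M_Θ` is nonsingular. -/
def IsGenericLSOP (k : Type*) [Field k] (Δ : FaceSet) {d : ℕ}
    (Θ : Fin d → MvPolynomial ℕ k) : Prop :=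
  IsLSOP k Δ Θ ∧ ∀ g : Fin d → ℕ, Function.Injective g → (∀ a, g a ∈ vertices Δ) →
    (Matrix.of fun a b : Fin d =>
      MvPolynomial.coeff (Finsupp.single (g b) 1) (Θ a)).det ≠ 0

/-- The full simplex on vertex set `V`. -/
def simplexOn (V : Finset ℕ) : FaceSet := V.powerset

/-- The boundary complex of the simplex on vertex set `V`. -/
def boundaryOn (V : Finset ℕ) : FaceSet := V.powerset.erase V

/-- The join `Δ * Γ` of two complexes (on disjoint vertex sets). -/
def joinFS (Δ Γ : FaceSet) : FaceSet := Finset.image₂ (· ∪ ·) Δ Γ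

/-- The link `lk_σ Δ = {τ ∈ Δ : τ ∪ σ ∈ Δ, τ ∩ σ = ∅}`. -/
def linkFS (Δ : FaceSet) (σ : Finset ℕ) : FaceSet :=
  Δ.filter fun τ => Disjoint σ τ ∧ σ ∪ τ ∈ Δ

/-- The star `st_σ Δ = {τ ∈ Δ : τ ∪ σ ∈ Δ}`. -/
def starFS (Δ : FaceSet) (σ : Finset ℕ) : FaceSet :=
  Δ.filter fun τ => σ ∪ τ ∈ Δ

/-- `Δ'` is obtained from the pure `(d-1)`-dimensional complex `Δ` by a bistellar
`i`-move: the star of a `(d-1-i)`-face `σ` with `lk_σ Δ = ∂Δ^i` (on a vertex set `τ`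
which is not a face of `Δ`) is replaced by `∂σ * Δ^i`. -/
def BistellarMove (d i : ℕ) (Δ Δ' : FaceSet) : Prop :=
  ∃ σ τ : Finset ℕ, σ ∈ Δ ∧ σ.card = d - i ∧ τ.card = i + 1 ∧ τ ∉ Δ ∧
    linkFS Δ σ = boundaryOn τ ∧
    Δ' = (Δ \ starFS Δ σ) ∪ joinFS (boundaryOn σ) (simplexOn τ)

/-- `Δ` is a PL `(d-1)`-sphere: by Pachner's theorem, a complex obtainable from the
boundary `∂Δ^d` of a `d`-simplex by a finite sequence of bistellar moves. -/
def IsPLSphere (d : ℕ) (Δ : FaceSet) : Prop :=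
  ∃ V : Finset ℕ, V.card = d + 1 ∧
    Relation.ReflTransGen (fun K K' => ∃ i < d, BistellarMove d i K K') (boundaryOn V) Δ

/-- `Δ` is a PL manifold of dimension `n`: an `n`-dimensional simplicial complex all of
whose links of nonempty faces `σ` are PL spheres of dimension `n - |σ|`. -/
def IsPLManifold (n : ℕ) (Δ : FaceSet) : Prop :=
  IsComplex Δ ∧ hasDim Δ n ∧
    ∀ σ ∈ Δ, σ ≠ ∅ → IsPLSphere (n + 1 - σ.card) (linkFS Δ σ)

/-- The (finite) type of faces of `Δ` of cardinality `j`. -/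
abbrev FacesOf (Δ : FaceSet) (j : ℕ) : Type := ↥(Δ.filter fun σ => σ.card = j)

/-- The matrix of the simplicial boundary map from chains on faces of cardinality `j+1`
to chains on faces of cardinality `j`, with the usual signs (vertices ordered as in `ℕ`). -/
noncomputable def boundaryMatrix (k : Type*) [Field k] (Δ : FaceSet) (j : ℕ) :
    Matrix (FacesOf Δ j) (FacesOf Δ (j + 1)) k :=
  Matrix.of fun τ σ =>
    if (τ : Finset ℕ) ⊆ (σ : Finset ℕ) then
      ∑ t ∈ (σ : Finset ℕ) \ (τ : Finset ℕ),
        (-1 : k) ^ (((σ : Finset ℕ).filter fun s => s < t).card)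
    else 0

/-- The simplicial boundary map (as a linear map) of the reduced (augmented) chain complex
of `Δ` over `k`, from chains of cardinality `j+1` to chains of cardinality `j`. -/
noncomputable def bnd (k : Type*) [Field k] (Δ : FaceSet) (j : ℕ) :
    (FacesOf Δ (j + 1) → k) →ₗ[k] (FacesOf Δ j → k) :=
  (boundaryMatrix k Δ j).mulVecLin

/-- The reduced Betti numbers `β̃_i(Δ; k)` of `Δ` over `k` (reduced simplicial homology). -/
noncomputable def reducedBetti (k : Type*) [Field k] (Δ : FaceSet) : ℤ → ℕ
  | Int.ofNat i =>
      finrank k (LinearMap.ker (bnd k Δ i)) -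
        finrank k ↥(LinearMap.range (bnd k Δ (i + 1)) ⊓ LinearMap.ker (bnd k Δ i))
  | Int.negSucc 0 =>
      finrank k (FacesOf Δ 0 → k) - finrank k ↥(LinearMap.range (bnd k Δ 0))
  | Int.negSucc (_ + 1) => 0

/-- `Δ` has the same reduced homology over `k` as the sphere `S^n`. -/
def SameHomologyAs (k : Type*) [Field k] (Δ : FaceSet) (n : ℤ) : Prop :=
  ∀ i : ℤ, reducedBetti k Δ i = if i = n then 1 else 0

/-- `Δ` is a `k`-homology manifold of dimension `n`: the link of every nonempty face `σ`
has the reduced `k`-homology of a sphere of dimension `n - |σ|`. -/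
def IsHomologyManifold (k : Type*) [Field k] (Δ : FaceSet) (n : ℕ) : Prop :=
  IsComplex Δ ∧ hasDim Δ n ∧
    ∀ σ ∈ Δ, σ ≠ ∅ → SameHomologyAs k (linkFS Δ σ) ((n : ℤ) - σ.card)

/-- `Δ` is a `k`-homology `n`-sphere: a `k`-homology `n`-manifold with the same
`k`-homology as `S^n`. -/
def IsHomologySphere (k : Type*) [Field k] (Δ : FaceSet) (n : ℕ) : Prop :=
  IsHomologyManifold k Δ n ∧ SameHomologyAs k Δ (n : ℤ)

/-! Write `U = V ∪ W`; it has `d + 1` vertices, where `d = i + j + 1` is the number of linear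
forms. Modulo the Stanley–Reisner ideal the variables outside `U` vanish, and since some
maximal minor of the coefficient matrix of `Θ` on `U` is nonsingular, all the `x_u` become
proportional to a single one; hence `(k[Δ]/Θ)_j` is spanned by one element.
Conversely, the signed maximal minors of that matrix (Cramer's rule) give a common zero `p` of
`Θ` with all coordinates on `U` nonzero, and `x_u ↦ p_u t` defines a map
`k[Δ]/Θ → k[t]/(t^{j+1})`: a non-face either leaves `U` or contains `W`, so it has at least
`j + 1` vertices and is killed, while `x_σ` goes to a nonzero multiple of `t^j`. -/

open Matrix

theorem MvPolynomial.aeval_smul_of_isHomogeneous {σ R S : Type*} [CommSemiring R]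
    [CommSemiring S] [Algebra R S] {p : MvPolynomial σ R} {m : ℕ} (hp : p.IsHomogeneous m)
    (a : σ → R) (r : S) : aeval (fun n => a n • r) p = eval a p • r ^ m := by
  induction hp using IsWeightedHomogeneous.induction_on with
  | zero => simp
  | add p q _ _ hp hq => simp [hp, hq, add_smul]
  | monomial d c hd =>
    simp only [Finsupp.weight_apply, Finsupp.sum, Pi.one_apply, smul_eq_mul, mul_one] at hd
    simp only [aeval_monomial, eval_monomial, Finsupp.prod, smul_pow, Finset.prod_smul,
      Finset.prod_pow_eq_pow_sum, hd, mul_smul, Algebra.smul_def c]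

theorem MvPolynomial.aeval_eq_sum_coeff_smul_of_isHomogeneous_one {σ R S : Type*}
    [CommSemiring R] [CommSemiring S] [Algebra R S] {p : MvPolynomial σ R}
    (hp : p.IsHomogeneous 1) {ι : Type*} [Fintype ι] (e : ι ↪ σ) {f : σ → S}
    (hf : ∀ n ∉ Set.range e, f n = 0) :
    aeval f p = ∑ b, coeff (Finsupp.single (e b) 1) p • f (e b) := by
  classical
  rw [← mem_homogeneousSubmodule, homogeneousSubmodule_one_eq_span_X] at hp
  induction hp using Submodule.span_induction with
  | mem q hq =>
    obtain ⟨n, rfl⟩ := hq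
    simp only [aeval_X, coeff_X, Finsupp.single_left_inj one_ne_zero, ite_smul, one_smul,
      zero_smul]
    by_cases hn : n ∈ Set.range e
    · obtain ⟨b, rfl⟩ := hn
      simp [e.injective.eq_iff]
    · simp_all [eq_comm]
  | zero => simp
  | add p q _ _ hp hq => simp [hp, hq, add_smul, Finset.sum_add_distrib]
  | smul a p _ hp =>
    rw [map_smul, hp, Finset.smul_sum]
    simp only [coeff_smul, smul_eq_mul, mul_smul]

theorem Matrix.mulVec_alternatingMinors_eq_zero {R : Type*} [CommRing R] {d : ℕ}
    (A : Matrix (Fin d) (Fin (d + 1)) R) :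
    A *ᵥ (fun b => (-1) ^ (b : ℕ) * (A.submatrix id b.succAbove).det) = 0 := by
  ext a
  -- expand along the first row a matrix whose first two rows are both row `a` of `A`
  let B : Matrix (Fin (d + 1)) (Fin (d + 1)) R := of (Fin.cons (A a) A)
  have hB : B.det = 0 := det_zero_of_row_eq (Fin.succ_ne_zero a).symm rfl
  rw [det_succ_row_zero] at hB
  simp only [mulVec, dotProduct, Pi.zero_apply]
  refine Eq.trans (Finset.sum_congr rfl fun b _ => ?_) hB
  rw [mul_left_comm, mul_assoc]
  rfl

theorem Matrix.mem_span_singleton_of_forall_sum_smul_eq_zero {R M : Type*} [CommRing R]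
    [AddCommGroup M] [Module R M] {d : ℕ} (A : Matrix (Fin d) (Fin (d + 1)) R)
    (hA : IsUnit (A.submatrix id Fin.succ).det) {x : Fin (d + 1) → M}
    (hx : ∀ a, ∑ b, A a b • x b = 0) (b : Fin (d + 1)) : x b ∈ R ∙ x 0 := by
  induction b using Fin.cases with
  | zero => exact Submodule.mem_span_singleton_self _
  | succ b =>
    set N := A.submatrix id Fin.succ
    -- `y ᵥ* A` is the unit vector at `b.succ` except for its entry at `0`
    set y := Pi.single b 1 ᵥ* N⁻¹
    have hy : ∀ c, (y ᵥ* A) c.succ = (Pi.single b 1 : Fin d → R) c := fun c => by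
      change (y ᵥ* N) c = _
      rw [vecMul_vecMul, nonsing_inv_mul _ hA, vecMul_one]
    have hyx : ∑ c, (y ᵥ* A) c • x c = 0 := by
      simp_rw [vecMul, dotProduct, Finset.sum_smul, mul_smul]
      rw [Finset.sum_comm]
      simp [← Finset.smul_sum, hx]
    rw [Fin.sum_univ_succ] at hyx
    simp only [hy, Pi.single_apply, ite_smul, one_smul, zero_smul, Finset.sum_ite_eq',
      Finset.mem_univ, if_true] at hyx
    rw [Submodule.mem_span_singleton]
    exact ⟨-(y ᵥ* A) 0, by rw [neg_smul, neg_eq_iff_eq_neg, eq_neg_iff_add_eq_zero, hyx]⟩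

theorem Submodule.finrank_eq_one_and_span_singleton_eq {K V : Type*} [DivisionRing K]
    [AddCommGroup V] [Module K V] {P : Submodule K V} {v w : V} (hP : P ≤ K ∙ w) (hv : v ∈ P)
    (hv0 : v ≠ 0) : finrank K P = 1 ∧ K ∙ v = P := by
  have : FiniteDimensional K P := Submodule.finiteDimensional_of_le hP
  have hP1 : finrank K P ≤ 1 :=
    (Submodule.finrank_mono hP).trans
      (by simpa using finrank_span_le_card (R := K) ({w} : Set V))
  have hvP : K ∙ v ≤ P := (Submodule.span_singleton_le_iff_mem v P).mpr hv
  have hv1 : finrank K (K ∙ v) = 1 := finrank_span_singleton hv0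
  refine ⟨le_antisymm hP1 (hv1 ▸ Submodule.finrank_mono hvP), ?_⟩
  exact Submodule.eq_of_le_of_finrank_le hvP (hv1 ▸ hP1)

theorem AdjoinRoot.eq_zero_of_smul_root_pow_eq_zero {K : Type*} [CommRing K] {j : ℕ} {a : K}
    (h : a • root (Polynomial.X ^ (j + 1) : Polynomial K) ^ j = 0) : a = 0 := by
  rw [Algebra.smul_def, algebraMap_eq, ← mk_C, ← mk_X, ← map_pow, ← map_mul, mk_eq_zero,
    Polynomial.X_pow_dvd_iff] at h
  simpa using h j (Nat.lt_succ_self j)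

/-- The coefficient matrix `M_Θ`, restricted to the columns of the vertices `g b`. -/
noncomputable def coeffMatrix {k : Type*} [CommRing k] {d : ℕ} (Θ : Fin d → MvPolynomial ℕ k)
    {ι : Type*} (g : ι → ℕ) : Matrix (Fin d) ι k :=
  Matrix.of fun a b => coeff (Finsupp.single (g b) 1) (Θ a)

section CommRing

variable {k : Type*} [CommRing k] {Δ : FaceSet} {d : ℕ} {Θ : Fin d → MvPolynomial ℕ k}
  {S : Set (MvPolynomial ℕ k)}

theorem isHomogeneous_faceMonomial (s : Finset ℕ) :
    (faceMonomial k s).IsHomogeneous s.card := by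
  simpa [faceMonomial] using
    IsHomogeneous.prod s (fun n => (X n : MvPolynomial ℕ k)) (fun _ => 1) fun n _ =>
      isHomogeneous_X k n

theorem eval_faceMonomial (p : ℕ → k) (s : Finset ℕ) :
    eval p (faceMonomial k s) = ∏ n ∈ s, p n := by
  simp [faceMonomial]

theorem X_mem_SRIdeal {n : ℕ} (hn : {n} ∉ Δ) : X n ∈ SRIdeal k Δ :=
  Ideal.subset_span ⟨{n}, hn, by rw [faceMonomial, prod_singleton]⟩

theorem mk_faceMonomial_mem_gradedPiece (s : Finset ℕ) :
    Ideal.Quotient.mk (SRIdeal k Δ ⊔ Ideal.span S) (faceMonomial k s) ∈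
      gradedPiece k Δ S s.card :=
  ⟨_, (mem_homogeneousSubmodule _ _).mpr (isHomogeneous_faceMonomial s), rfl⟩

theorem gradedPiece_eq_pow (j : ℕ) : gradedPiece k Δ S j = gradedPiece k Δ S 1 ^ j := by
  rw [gradedPiece, gradedPiece, ← homogeneousSubmodule_one_pow, Submodule.map_pow]

theorem gradedPiece_le_span_pow {z : QuotRing k Δ S}
    (hz : ∀ n, Ideal.Quotient.mk (SRIdeal k Δ ⊔ Ideal.span S) (X n) ∈ k ∙ z) (j : ℕ) :
    gradedPiece k Δ S j ≤ k ∙ z ^ j := by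
  have h1 : gradedPiece k Δ S 1 ≤ k ∙ z := by
    rw [gradedPiece, homogeneousSubmodule_one_eq_span_X, Submodule.map_span, Submodule.span_le]
    rintro _ ⟨_, ⟨n, rfl⟩, rfl⟩
    exact hz n
  rw [gradedPiece_eq_pow, ← Set.singleton_pow, ← Submodule.span_pow]
  exact pow_le_pow_left' h1 j

theorem eval_extend_eq_mulVec_coeffMatrix (hΘ : ∀ a, (Θ a).IsHomogeneous 1) {m : ℕ}
    (e : Fin m ↪ ℕ) (c : Fin m → k) (a : Fin d) :
    eval (Function.extend e c 0) (Θ a) = (coeffMatrix Θ e *ᵥ c) a := by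
  rw [← aeval_eq_eval, aeval_eq_sum_coeff_smul_of_isHomogeneous_one (hΘ a) e
    fun n hn => Function.extend_apply' (f := e) c 0 n hn]
  simp [mulVec, dotProduct, coeffMatrix, e.injective.extend_apply]

theorem mk_X_mem_span_mk_X (hΘ : ∀ a, (Θ a).IsHomogeneous 1) (e : Fin (d + 1) ↪ ℕ)
    (he : ∀ n ∉ Set.range e, {n} ∉ Δ) (hdet : IsUnit (coeffMatrix Θ (e ∘ Fin.succ)).det)
    (n : ℕ) :
    Ideal.Quotient.mk (SRIdeal k Δ ⊔ Ideal.span (Set.range Θ)) (X n) ∈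
      k ∙ Ideal.Quotient.mk (SRIdeal k Δ ⊔ Ideal.span (Set.range Θ)) (X (e 0)) := by
  set I := SRIdeal k Δ ⊔ Ideal.span (Set.range Θ)
  have hX : ∀ n ∉ Set.range e, Ideal.Quotient.mk I (X n) = 0 := fun n hn =>
    Ideal.Quotient.eq_zero_iff_mem.mpr (Ideal.mem_sup_left (X_mem_SRIdeal (he n hn)))
  by_cases hn : n ∈ Set.range e
  · obtain ⟨b, rfl⟩ := hn
    refine Matrix.mem_span_singleton_of_forall_sum_smul_eq_zero (coeffMatrix Θ e) hdet
      (x := fun b => Ideal.Quotient.mk I (X (e b))) (fun a => ?_) b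
    have hΘa : Ideal.Quotient.mkₐ k I (Θ a) = 0 := Ideal.Quotient.eq_zero_iff_mem.mpr
      (Ideal.mem_sup_right (Ideal.subset_span ⟨a, rfl⟩))
    rwa [aeval_unique (Ideal.Quotient.mkₐ k I),
      aeval_eq_sum_coeff_smul_of_isHomogeneous_one (hΘ a) e
        (f := Ideal.Quotient.mkₐ k I ∘ X) hX] at hΘa
  · rw [hX n hn]
    exact zero_mem _

end CommRing

section Field

variable {k : Type*} [Field k] {Δ : FaceSet} {d : ℕ} {Θ : Fin d → MvPolynomial ℕ k}

theorem IsGenericLSOP.det_coeffMatrix_ne_zero (hΘ : IsGenericLSOP k Δ Θ) {g : Fin d → ℕ}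
    (hg : Function.Injective g) (hgΔ : ∀ a, {g a} ∈ Δ) : (coeffMatrix Θ g).det ≠ 0 :=
  hΘ.2 g hg fun a => le_sup (f := id) (hgΔ a) (mem_singleton_self _)

theorem exists_eval_eq_zero_of_det_coeffMatrix_ne_zero (hΘ : ∀ a, (Θ a).IsHomogeneous 1)
    (e : Fin (d + 1) ↪ ℕ)
    (hminor : ∀ b : Fin (d + 1), (coeffMatrix Θ (e ∘ b.succAbove)).det ≠ 0) :
    ∃ p : ℕ → k, (∀ a, eval p (Θ a) = 0) ∧ (∀ b, p (e b) ≠ 0) ∧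
      ∀ n ∉ Set.range e, p n = 0 := by
  set c : Fin (d + 1) → k := fun b =>
    (-1) ^ (b : ℕ) * ((coeffMatrix Θ e).submatrix id b.succAbove).det
  refine ⟨Function.extend e c 0, fun a => ?_, fun b => ?_, fun n hn => ?_⟩
  · rw [eval_extend_eq_mulVec_coeffMatrix hΘ, mulVec_alternatingMinors_eq_zero, Pi.zero_apply]
  · rw [e.injective.extend_apply]
    exact mul_ne_zero (pow_ne_zero _ (neg_ne_zero.mpr one_ne_zero)) (hminor b)
  · exact Function.extend_apply' (f := e) c 0 n hn

theorem mk_faceMonomial_ne_zero (hΘ : ∀ a, (Θ a).IsHomogeneous 1) {p : ℕ → k}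
    (hp : ∀ a, eval p (Θ a) = 0) {σ : Finset ℕ} (hσ : ∀ n ∈ σ, p n ≠ 0)
    (hΔ : ∀ s ∉ Δ, σ.card < s.card ∨ ∃ n ∈ s, p n = 0) :
    Ideal.Quotient.mk (SRIdeal k Δ ⊔ Ideal.span (Set.range Θ)) (faceMonomial k σ) ≠ 0 := by
  have ht := AdjoinRoot.eval₂_root (Polynomial.X ^ (σ.card + 1) : Polynomial k)
  rw [Polynomial.eval₂_X_pow] at ht
  set t := AdjoinRoot.root (Polynomial.X ^ (σ.card + 1) : Polynomial k)
  set ψ := aeval (R := k) fun n => p n • t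
  have hψ (s : Finset ℕ) : ψ (faceMonomial k s) = (∏ n ∈ s, p n) • t ^ s.card := by
    rw [aeval_smul_of_isHomogeneous (isHomogeneous_faceMonomial s), eval_faceMonomial]
  have hI : SRIdeal k Δ ⊔ Ideal.span (Set.range Θ) ≤ RingHom.ker ψ := by
    refine sup_le (Ideal.span_le.mpr ?_) (Ideal.span_le.mpr ?_)
    · rintro _ ⟨s, hs, rfl⟩
      rw [SetLike.mem_coe, RingHom.mem_ker, hψ]
      rcases hΔ s hs with hcard | ⟨n, hn, hpn⟩
      · rw [pow_eq_zero_of_le hcard ht, smul_zero]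
      · rw [prod_eq_zero hn hpn, zero_smul]
    · rintro _ ⟨a, rfl⟩
      rw [SetLike.mem_coe, RingHom.mem_ker,
        aeval_smul_of_isHomogeneous (hΘ a), hp a, zero_smul]
  intro h
  have h0 := hI (Ideal.Quotient.eq_zero_iff_mem.mp h)
  rw [RingHom.mem_ker, hψ] at h0
  exact prod_ne_zero_iff.mpr hσ (AdjoinRoot.eq_zero_of_smul_root_pow_eq_zero h0)

theorem IsGenericLSOP.finrank_gradedPiece_eq_one_and_span_mk_faceMonomial
    (hΘ : IsGenericLSOP k Δ Θ) (e : Fin (d + 1) ↪ ℕ)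
    (hvert : ∀ n, {n} ∈ Δ ↔ n ∈ Set.range e) {σ : Finset ℕ}
    (hσ : ↑σ ⊆ Set.range e) (hΔ : ∀ s ∉ Δ, ↑s ⊆ Set.range e → σ.card < s.card) :
    finrank k (gradedPiece k Δ (Set.range Θ) σ.card) = 1 ∧
    Submodule.span k
        {Ideal.Quotient.mk (SRIdeal k Δ ⊔ Ideal.span (Set.range Θ)) (faceMonomial k σ)} =
      gradedPiece k Δ (Set.range Θ) σ.card := by
  have hminor (b : Fin (d + 1)) : (coeffMatrix Θ (e ∘ b.succAbove)).det ≠ 0 :=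
    hΘ.det_coeffMatrix_ne_zero (e.injective.comp Fin.succAbove_right_injective)
      fun _ => (hvert _).mpr ⟨_, rfl⟩
  have hupper := gradedPiece_le_span_pow (mk_X_mem_span_mk_X hΘ.1.1 e
    (fun n hn h => hn ((hvert n).mp h)) (hminor 0).isUnit) σ.card
  obtain ⟨p, hpΘ, hpe, hp0⟩ := exists_eval_eq_zero_of_det_coeffMatrix_ne_zero hΘ.1.1 e hminor
  refine Submodule.finrank_eq_one_and_span_singleton_eq hupper
    (mk_faceMonomial_mem_gradedPiece σ) (mk_faceMonomial_ne_zero hΘ.1.1 hpΘ ?_ ?_)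
  · intro n hn
    obtain ⟨b, rfl⟩ := hσ hn
    exact hpe b
  · intro s hs
    by_cases hsU : ↑s ⊆ Set.range e
    · exact .inl (hΔ s hs hsU)
    · obtain ⟨n, hns, hnU⟩ := Set.not_subset.mp hsU
      exact .inr ⟨n, hns, hp0 n hnU⟩

end Field

theorem mem_joinFS_simplexOn_boundaryOn {V W : Finset ℕ} (hVW : Disjoint V W) {s : Finset ℕ} :
    s ∈ joinFS (simplexOn V) (boundaryOn W) ↔ s ⊆ V ∪ W ∧ ¬ W ⊆ s := by
  simp only [joinFS, simplexOn, boundaryOn, mem_image₂, mem_powerset, mem_erase]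
  constructor
  · rintro ⟨a, ha, b, ⟨hbW, hb⟩, rfl⟩
    refine ⟨union_subset_union ha hb, fun hW => hbW (hb.antisymm fun w hw => ?_)⟩
    exact (mem_union.mp (hW hw)).resolve_left fun hwa => disjoint_left.mp hVW (ha hwa) hw
  · rintro ⟨hs, hW⟩
    refine ⟨s ∩ V, inter_subset_right, s ∩ W,
      ⟨fun h => hW (h ▸ inter_subset_left), inter_subset_right⟩, ?_⟩
    rw [← inter_union_distrib_left, inter_eq_left.mpr hs]

theorem face_monomial_generates_join_simplex_boundary_general (k : Type*) [Field k]
    (i j : ℕ) (hj : 1 ≤ j) (V W : Finset ℕ) (hV : V.card = i + 1) (hW : W.card = j + 1)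
    (hVW : Disjoint V W) (Δ : FaceSet) (hΔ : Δ = joinFS (simplexOn V) (boundaryOn W))
    {Θ : Fin (i + j + 1) → MvPolynomial ℕ k} (hΘ : IsGenericLSOP k Δ Θ)
    (σ : Finset ℕ) (hσ : σ ∈ Δ) (hcard : σ.card = j) :
    finrank k (gradedPiece k Δ (Set.range Θ) j) = 1 ∧
    Submodule.span k
        {Ideal.Quotient.mk (SRIdeal k Δ ⊔ Ideal.span (Set.range Θ)) (faceMonomial k σ)} =
      gradedPiece k Δ (Set.range Θ) j := by
  have hmem (s : Finset ℕ) : s ∈ Δ ↔ s ⊆ V ∪ W ∧ ¬ W ⊆ s :=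
    hΔ ▸ mem_joinFS_simplexOn_boundaryOn hVW
  have hU : (V ∪ W).card = i + j + 1 + 1 := by rw [card_union_of_disjoint hVW, hV, hW]; ring
  let e := ((V ∪ W).orderEmbOfFin hU).toEmbedding
  have hrange : Set.range e = ↑(V ∪ W) := range_orderEmbOfFin _ hU
  have hvert (n : ℕ) : {n} ∈ Δ ↔ n ∈ Set.range e := by
    rw [hrange, hmem, singleton_subset_iff, mem_coe, and_iff_left_iff_imp]
    intro _ hWn
    have := card_le_card hWn
    rw [hW, card_singleton] at this
    omega
  have hnonface (s : Finset ℕ) (hs : s ∉ Δ) (hsU : ↑s ⊆ Set.range e) :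
      σ.card < s.card := by
    rw [hrange, coe_subset] at hsU
    have hWs : W ⊆ s := by simpa [hmem, hsU] using hs
    have := card_le_card hWs
    omega
  subst hcard
  exact hΘ.finrank_gradedPiece_eq_one_and_span_mk_faceMonomial e hvert
    (hrange ▸ coe_subset.mpr ((hmem σ).mp hσ).1) hnonface

/-- **Face monomials generate the top degree for `Δ^i * ∂Δ^j` with a generic l.s.o.p.**
Let `Δ = Δ^i * ∂Δ^j` and let `Θ` be a generic l.s.o.p. for `k[Δ]` (`k` infinite). Then
for every `(j-1)`-dimensional face `σ` of `Δ`, the face monomial `x_σ` generates the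
one-dimensional vector space `(k[Δ]/Θ)_j ≅ k`. -/
theorem face_monomial_generates_join_simplex_boundary (k : Type*) [Field k] [Infinite k]
    (i j : ℕ) (hj : 1 ≤ j) (V W : Finset ℕ) (hV : V.card = i + 1) (hW : W.card = j + 1)
    (hVW : Disjoint V W) (Δ : FaceSet) (hΔ : Δ = joinFS (simplexOn V) (boundaryOn W))
    {Θ : Fin (i + j + 1) → MvPolynomial ℕ k} (hΘ : IsGenericLSOP k Δ Θ)
    (σ : Finset ℕ) (hσ : σ ∈ Δ) (hcard : σ.card = j) :
    finrank k (gradedPiece k Δ (Set.range Θ) j) = 1 ∧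
    Submodule.span k
        {Ideal.Quotient.mk (SRIdeal k Δ ⊔ Ideal.span (Set.range Θ)) (faceMonomial k σ)} =
      gradedPiece k Δ (Set.range Θ) j :=
  face_monomial_generates_join_simplex_boundary_general k i j hj V W hV hW hVW Δ hΔ hΘ σ hσ hcard
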